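/- Let X be a Baire topological vector space, f, g : X → ℝ quasiconvex with {x : f(x) ≠ g(x)} meagre, and set m := T-ess inf_X f ∈ [−∞, ∞). If x is a point of continuity of g, then g(x) ≥ m. -/

import Mathlib

open Set Topology

/-- Topological essential infimum of `f` on `U`. -/
noncomputable def tessInf {X : Type*} [TopologicalSpace X] (f : X → ℝ) (U : Set X) : EReal :=
  sSup ((fun α : ℝ => (α : EReal)) '' {α : ℝ | IsMeagre {x ∈ U | f x < α}})

lemma meagre_union' {X : Type*} [TopologicalSpace X] {s t : Set X}
    (hs : IsMeagre s) (ht : IsMeagre t) : IsMeagre (s ∪ t) := by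
  rw [IsMeagre, compl_union]; exact Filter.inter_mem hs ht

theorem stmt8 {X : Type*} [AddCommGroup X] [Module ℝ X] [TopologicalSpace X]
    [IsTopologicalAddGroup X] [ContinuousSMul ℝ X] [BaireSpace X]
    (f g : X → ℝ) (hf : ∀ α : ℝ, Convex ℝ {x | f x < α})
    (hg : ∀ α : ℝ, Convex ℝ {x | g x < α})
    (hfg : IsMeagre {x | f x ≠ g x})
    (m : EReal) (hm : m = tessInf f Set.univ) (hm' : m < ⊤)
    (x : X) (hx : ContinuousAt g x) : m ≤ (g x : EReal) := by
  rw [hm, tessInf]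
  apply sSup_le
  rintro _ ⟨α, hα, rfl⟩
  simp only [mem_setOf_eq, mem_univ, true_and] at hα
  rw [EReal.coe_le_coe_iff]
  by_contra h
  push_neg at h
  -- g x < α, so g < α on a neighborhood of x
  have hnhds : {y | g y < α} ∈ 𝓝 x := hx (Iio_mem_nhds h)
  -- {g < α} ⊆ {f < α} ∪ {f ≠ g}, hence meagre
  have hmeag : IsMeagre {y | g y < α} := by
    refine (meagre_union' hα hfg).mono fun y hy => ?_
    by_cases hfy : f y = g y
    · exact Or.inl (by simp [mem_setOf_eq, hfy]; exact hy)
    · exact Or.inr hfy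
  -- but a set in 𝓝 x contains a nonempty open set, contradicting Baire
  obtain ⟨V, hVsub, hVopen, hxV⟩ := mem_nhds_iff.1 hnhds
  have hdense : Dense {y | g y < α}ᶜ := dense_of_mem_residual hmeag
  obtain ⟨z, hz1, hz2⟩ := hdense.inter_open_nonempty V hVopen ⟨x, hxV⟩
  exact hz2 (hVsub hz1)
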